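/- A space X is star-K-Scheepers if and only if for every sequence (U_n) of open covers of X there is a sequence (K_n) of compact subsets of X such that {St(K_n,U_n) : n ∈ ℕ} is a weakly groupable open cover of X. -/

import Mathlib

open Set

/-- Star of a set `A` with respect to a family `P`: `St(A,P) = ⋃{B ∈ P : A ∩ B ≠ ∅}`. -/
def st {X : Type*} (A : Set X) (P : Set (Set X)) : Set X :=
  ⋃₀ {B | B ∈ P ∧ (A ∩ B).Nonempty}

/-- `U` is an open cover of the space. -/
def IsOpenCover {X : Type*} [TopologicalSpace X] (U : Set (Set X)) : Prop :=
  (∀ V ∈ U, IsOpen V) ∧ ⋃₀ U = Set.univ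

/-- An ω-cover: an open cover such that every finite subset lies in some member. -/
def IsOmegaCover {X : Type*} [TopologicalSpace X] (U : Set (Set X)) : Prop :=
  IsOpenCover U ∧ ∀ F : Set X, F.Finite → ∃ V ∈ U, F ⊆ V

/-- The star-K-Scheepers property. -/
def StarKScheepers (X : Type*) [TopologicalSpace X] : Prop :=
  ∀ U : ℕ → Set (Set X), (∀ n, IsOpenCover (U n)) →
    ∃ K : ℕ → Set X, (∀ n, IsCompact (K n)) ∧
      IsOmegaCover {S | ∃ n, S = st (K n) (U n)}

/-- A weakly groupable open cover. -/
def IsWeaklyGroupable {X : Type*} [TopologicalSpace X] (U : Set (Set X)) : Prop :=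
  IsOpenCover U ∧ ∃ V : ℕ → Set (Set X),
    (∀ n, (V n).Finite) ∧ (∀ m n, m ≠ n → Disjoint (V m) (V n)) ∧
    U = ⋃ n, V n ∧ ∀ F : Set X, F.Finite → ∃ n, F ⊆ ⋃₀ (V n)

/-!
An ω-cover `{S_n}` is weakly groupable: let the `n`-th group consist of `S_n` alone if it is
a first occurrence in the sequence, and be empty otherwise.

Conversely, apply the hypothesis to the covers `W_n` of all intersections `B_0 ∩ ⋯ ∩ B_n`
with `B_i ∈ U_i`. For `n ≤ i` the cover `W_i` refines `U_n`, so `St(K, W_i) ⊆ St(K, U_n)`.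
Hence if a finite group of stars `St(K_i, W_i)`, `i ∈ J`, contains a finite set, so does the
single star `St(⋃_{i ∈ J} K_i, U_n)` with `n = min J`. Distinct groups are disjoint and so
have distinct minima, which lets us put the compact set `⋃_{i ∈ J} K_i` at index `min J`.
-/

open Function

section FirstOccurrence

variable {α : Type*} (S : ℕ → α)

def firstOccurrence (n : ℕ) : Set α := {S n} \ S '' Iio n

theorem finite_firstOccurrence (n : ℕ) : (firstOccurrence S n).Finite :=
  (finite_singleton _).subset sdiff_subset

theorem pairwise_disjoint_firstOccurrence : Pairwise (Disjoint on firstOccurrence S) := by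
  intro m n hmn
  rw [onFun, disjoint_left]
  rintro _ ⟨rfl, hm⟩ ⟨heq, hn⟩
  rcases hmn.lt_or_gt with h | h
  · exact hn ⟨m, h, rfl⟩
  · exact hm ⟨n, h, (eq_of_mem_singleton heq).symm⟩

theorem exists_mem_firstOccurrence (k : ℕ) : ∃ n, S k ∈ firstOccurrence S n := by
  classical
  have h : ∃ n, S n = S k := ⟨k, rfl⟩
  exact ⟨Nat.find h, (Nat.find_spec h).symm, fun ⟨m, hm, hSm⟩ => Nat.find_min h hm hSm⟩

theorem iUnion_firstOccurrence : ⋃ n, firstOccurrence S n = range S := by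
  refine Subset.antisymm (iUnion_subset fun n => ?_) ?_
  · exact sdiff_subset.trans (singleton_subset_iff.2 (mem_range_self n))
  · rintro _ ⟨k, rfl⟩
    exact mem_iUnion.2 (exists_mem_firstOccurrence S k)

end FirstOccurrence

section Stars

variable {X : Type*}

theorem st_mono {A A' : Set X} {P Q : Set (Set X)} (hA : A ⊆ A')
    (hPQ : ∀ B ∈ P, ∃ C ∈ Q, B ⊆ C) : st A P ⊆ st A' Q := by
  rintro x ⟨B, ⟨hBP, hne⟩, hxB⟩
  obtain ⟨C, hCQ, hBC⟩ := hPQ B hBP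
  exact ⟨C, ⟨hCQ, hne.mono (inter_subset_inter hA hBC)⟩, hBC hxB⟩

theorem isOpen_st [TopologicalSpace X] {A : Set X} {P : Set (Set X)}
    (hP : ∀ B ∈ P, IsOpen B) : IsOpen (st A P) :=
  isOpen_sUnion fun B hB => hP B hB.1

theorem isOmegaCover_of_forall_finite [TopologicalSpace X] {U : Set (Set X)}
    (hopen : ∀ V ∈ U, IsOpen V) (hfin : ∀ F : Set X, F.Finite → ∃ V ∈ U, F ⊆ V) :
    IsOmegaCover U := by
  refine ⟨⟨hopen, eq_univ_of_forall fun x => ?_⟩, hfin⟩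
  obtain ⟨V, hV, hxV⟩ := hfin {x} (finite_singleton x)
  exact ⟨V, hV, hxV rfl⟩

def commonRefinement (U : ℕ → Set (Set X)) (n : ℕ) : Set (Set X) :=
  {B | ∃ f : ℕ → Set X, (∀ i, f i ∈ U i) ∧ B = ⋂ i ≤ n, f i}

theorem commonRefinement_refines (U : ℕ → Set (Set X)) {n i : ℕ} (h : n ≤ i) :
    ∀ B ∈ commonRefinement U i, ∃ C ∈ U n, B ⊆ C := by
  rintro _ ⟨f, hf, rfl⟩
  exact ⟨f n, hf n, biInter_subset_of_mem (t := f) h⟩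

theorem isOpenCover_commonRefinement [TopologicalSpace X] {U : ℕ → Set (Set X)}
    (hU : ∀ n, IsOpenCover (U n)) (n : ℕ) : IsOpenCover (commonRefinement U n) := by
  constructor
  · rintro _ ⟨f, hf, rfl⟩
    exact (finite_Iic n).isOpen_biInter fun i _ => (hU i).1 _ (hf i)
  · refine eq_univ_of_forall fun x => ?_
    have hx : ∀ i, ∃ B ∈ U i, x ∈ B := fun i => mem_sUnion.1 ((hU i).2.symm ▸ mem_univ x)
    choose f hf hxf using hx
    exact ⟨_, ⟨f, hf, rfl⟩, mem_iInter₂.2 fun i _ => hxf i⟩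

end Stars

section Groupable

variable {X : Type*} [TopologicalSpace X]

theorem IsOmegaCover.isWeaklyGroupable {S : ℕ → Set X}
    (h : IsOmegaCover {T | ∃ n, T = S n}) : IsWeaklyGroupable {T | ∃ n, T = S n} := by
  refine ⟨h.1, firstOccurrence S, finite_firstOccurrence S,
    pairwise_disjoint_firstOccurrence S, ?_, fun F hF => ?_⟩
  · rw [iUnion_firstOccurrence]
    ext
    simp [eq_comm]
  · obtain ⟨_, ⟨k, rfl⟩, hFk⟩ := h.2 F hF
    obtain ⟨n, hn⟩ := exists_mem_firstOccurrence S k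
    exact ⟨n, hFk.trans (subset_sUnion_of_mem hn)⟩

theorem IsWeaklyGroupable.exists_index_groups {S : ℕ → Set X}
    (h : IsWeaklyGroupable {T | ∃ n, T = S n}) :
    ∃ J : ℕ → Finset ℕ, Pairwise (Disjoint on J) ∧
      ∀ F : Set X, F.Finite → ∃ m, F ⊆ ⋃ i ∈ J m, S i := by
  classical
  obtain ⟨-, V, hVfin, hVdisj, hVunion, hVcover⟩ := h
  have hV : ∀ T ∈ ⋃ m, V m, ∃ n, T = S n := fun T hT => by rwa [← hVunion] at hT
  choose! idx hidx using hV
  refine ⟨fun m => (hVfin m).toFinset.image idx, fun m₁ m₂ hne => ?_, fun F hF => ?_⟩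
  · rw [onFun, Finset.disjoint_left]
    simp only [Finset.mem_image, Finite.mem_toFinset]
    rintro _ ⟨T₁, hT₁, rfl⟩ ⟨T₂, hT₂, heq⟩
    have hT : T₂ = T₁ := by
      rw [hidx T₁ (mem_iUnion_of_mem _ hT₁), hidx T₂ (mem_iUnion_of_mem _ hT₂), heq]
    exact disjoint_left.1 (hVdisj m₁ m₂ hne) hT₁ (hT ▸ hT₂)
  · obtain ⟨m, hFm⟩ := hVcover F hF
    refine ⟨m, fun x hx => ?_⟩
    obtain ⟨T, hT, hxT⟩ := hFm hx
    simp only [Finset.mem_image, Finite.mem_toFinset, mem_iUnion]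
    exact ⟨idx T, ⟨T, hT, rfl⟩, hidx T (mem_iUnion_of_mem _ hT) ▸ hxT⟩

end Groupable

/-- Disjoint nonempty sets have distinct minima, so `g` can send each minimum back to its set. -/
theorem exists_index_mem_lowerBounds_of_pairwise_disjoint {J : ℕ → Finset ℕ}
    (hJ : Pairwise (Disjoint on J)) :
    ∃ g : ℕ → ℕ, ∀ m, (J m).Nonempty → ∃ n, g n = m ∧ ∀ i ∈ J m, n ≤ i := by
  let μ : ℕ → ℕ := fun m => sInf (J m : Set ℕ)
  have hμ : ∀ m, (J m).Nonempty → μ m ∈ J m := fun m hm =>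
    Nat.sInf_mem (s := (J m : Set ℕ)) hm
  have hinj : InjOn μ {m | (J m).Nonempty} := fun m₁ h₁ m₂ h₂ heq =>
    by_contra fun hne => Finset.disjoint_left.1 (hJ hne) (hμ m₁ h₁) (heq ▸ hμ m₂ h₂)
  exact ⟨invFunOn μ {m | (J m).Nonempty}, fun m hm =>
    ⟨μ m, hinj.leftInvOn_invFunOn hm, fun i hi => Nat.sInf_le hi⟩⟩

theorem exists_isOmegaCover_st_of_index_groups {X : Type*} [TopologicalSpace X]
    {U : ℕ → Set (Set X)} (hU : ∀ n, ∀ V ∈ U n, IsOpen V) {K : ℕ → Set X}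
    (hK : ∀ n, IsCompact (K n)) {J : ℕ → Finset ℕ} (hJ : Pairwise (Disjoint on J))
    (hcover : ∀ F : Set X, F.Finite → ∃ m, F ⊆ ⋃ i ∈ J m, st (K i) (commonRefinement U i)) :
    ∃ K' : ℕ → Set X, (∀ n, IsCompact (K' n)) ∧
      IsOmegaCover {S | ∃ n, S = st (K' n) (U n)} := by
  obtain ⟨g, hg⟩ := exists_index_mem_lowerBounds_of_pairwise_disjoint hJ
  refine ⟨fun n => ⋃ i ∈ J (g n), K i, fun n => (J (g n)).isCompact_biUnion fun i _ => hK i,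
    isOmegaCover_of_forall_finite ?_ fun F hF => ?_⟩
  · rintro _ ⟨n, rfl⟩
    exact isOpen_st (hU n)
  obtain ⟨m, hFm⟩ := hcover F hF
  rcases (J m).eq_empty_or_nonempty with hm | hm
  · exact ⟨_, ⟨0, rfl⟩, hFm.trans (by simp [hm])⟩
  obtain ⟨n, rfl, hn⟩ := hg m hm
  exact ⟨_, ⟨n, rfl⟩, hFm.trans <| iUnion₂_subset fun i hi =>
    st_mono (subset_biUnion_of_mem (u := K) hi) (commonRefinement_refines U (hn i hi))⟩

/-- `X` is star-K-Scheepers iff for every sequence of open covers there are compact sets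
whose stars form a weakly groupable open cover. -/
theorem starKScheepers_iff_weakly_groupable {X : Type*} [TopologicalSpace X] :
    StarKScheepers X ↔
      ∀ U : ℕ → Set (Set X), (∀ n, IsOpenCover (U n)) →
        ∃ K : ℕ → Set X, (∀ n, IsCompact (K n)) ∧
          IsWeaklyGroupable {S | ∃ n, S = st (K n) (U n)} := by
  constructor
  · intro h U hU
    obtain ⟨K, hK, hω⟩ := h U hU
    exact ⟨K, hK, hω.isWeaklyGroupable⟩
  · intro h U hU
    obtain ⟨K, hK, hgroup⟩ := h (commonRefinement U) (isOpenCover_commonRefinement hU)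
    obtain ⟨J, hJ, hcover⟩ := IsWeaklyGroupable.exists_index_groups hgroup
    exact exists_isOmegaCover_st_of_index_groups (fun n => (hU n).1) hK hJ hcover
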